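/- At every point (u, v, w) with W(u) > 0, f(u) ≠ 0 and cos w ≠ 0, the third (Gauss–Kronecker) curvature of the rotational hypersurface is 𝔠₃ = −φ'²·ψ/(f²·W^{5/2}). -/

import Mathlib

open Real Matrix

noncomputable section

/-- A vector in Euclidean 4-space `𝔼⁴`. -/
def vec4 (a b c d : ℝ) : EuclideanSpace ℝ (Fin 4) :=
  (WithLp.equiv 2 (Fin 4 → ℝ)).symm ![a, b, c, d]

/-- Partial derivative in the `i`-th variable (`i = 0,1,2` for `u,v,w`)
of a map `ℝ³ → 𝔼⁴`. -/
def pd : Fin 3 → (ℝ → ℝ → ℝ → EuclideanSpace ℝ (Fin 4)) →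
    ℝ → ℝ → ℝ → EuclideanSpace ℝ (Fin 4)
  | 0, X, u, v, w => deriv (fun t => X t v w) u
  | 1, X, u, v, w => deriv (fun t => X u t w) v
  | 2, X, u, v, w => deriv (fun t => X u v t) w

/-- The rotational hypersurface in `𝔼⁴` generated by the profile curve
`u ↦ (f u, 0, 0, φ u)` rotated about the `x₄`-axis. -/
def rotHyp (f φ : ℝ → ℝ) (u v w : ℝ) : EuclideanSpace ℝ (Fin 4) :=
  vec4 (f u * cos v * cos w) (f u * sin v * cos w) (f u * sin w) (φ u)

/-- The Gauss map `G = W^{-1/2}·(φ'·cos v·cos w, φ'·sin v·cos w, φ'·sin w, -f')`,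
where `W = f'² + φ'²`. -/
def gaussMap (f φ : ℝ → ℝ) (u v w : ℝ) : EuclideanSpace ℝ (Fin 4) :=
  ((deriv f u ^ 2 + deriv φ u ^ 2) ^ (-(1 : ℝ) / 2)) •
    vec4 (deriv φ u * cos v * cos w) (deriv φ u * sin v * cos w)
      (deriv φ u * sin w) (-deriv f u)

/-- The first fundamental form matrix `I = (⟨∂ᵢx, ∂ⱼx⟩)ᵢⱼ`. -/
def firstFF (f φ : ℝ → ℝ) (u v w : ℝ) : Matrix (Fin 3) (Fin 3) ℝ :=
  Matrix.of fun i j => (inner ℝ (pd i (rotHyp f φ) u v w) (pd j (rotHyp f φ) u v w) : ℝ)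

/-- The second fundamental form matrix `II = (⟨∂ᵢ∂ⱼx, G⟩)ᵢⱼ`. -/
def secondFF (f φ : ℝ → ℝ) (u v w : ℝ) : Matrix (Fin 3) (Fin 3) ℝ :=
  Matrix.of fun i j => (inner ℝ (pd i (pd j (rotHyp f φ)) u v w) (gaussMap f φ u v w) : ℝ)

/-- The third fundamental form matrix `III = (⟨∂ᵢG, ∂ⱼG⟩)ᵢⱼ`. -/
def thirdFF (f φ : ℝ → ℝ) (u v w : ℝ) : Matrix (Fin 3) (Fin 3) ℝ :=
  Matrix.of fun i j => (inner ℝ (pd i (gaussMap f φ) u v w) (pd j (gaussMap f φ) u v w) : ℝ)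

/-- The shape operator matrix `S = I⁻¹ · II`. -/
def shapeOp (f φ : ℝ → ℝ) (u v w : ℝ) : Matrix (Fin 3) (Fin 3) ℝ :=
  (firstFF f φ u v w)⁻¹ * secondFF f φ u v w

/-- The fourth fundamental form matrix `IV = III · S`. -/
def fourthFF (f φ : ℝ → ℝ) (u v w : ℝ) : Matrix (Fin 3) (Fin 3) ℝ :=
  thirdFF f φ u v w * shapeOp f φ u v w

lemma hasDerivAt_vec4 {a b c d : ℝ → ℝ} {a' b' c' d' t : ℝ}
    (ha : HasDerivAt a a' t) (hb : HasDerivAt b b' t) (hc : HasDerivAt c c' t)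
    (hd : HasDerivAt d d' t) :
    HasDerivAt (fun s => vec4 (a s) (b s) (c s) (d s)) (vec4 a' b' c' d') t := by
  have hg : HasDerivAt (fun s => ![a s, b s, c s, d s]) ![a', b', c', d'] t := by
    rw [hasDerivAt_pi]
    intro i
    fin_cases i
    · simpa using ha
    · simpa using hb
    · simpa using hc
    · simpa using hd
  exact ((PiLp.continuousLinearEquiv 2 ℝ (fun _ : Fin 4 => ℝ)).symm.toContinuousLinearMap.hasFDerivAt.comp_hasDerivAt t hg)

lemma inner_vec4 (a b c d a' b' c' d' : ℝ) :
    (inner ℝ (vec4 a b c d) (vec4 a' b' c' d') : ℝ) = a * a' + b * b' + c * c' + d * d' := by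
  simp [vec4, PiLp.inner_apply, Fin.sum_univ_four]
  ring

lemma smul_vec4 (r a b c d : ℝ) : r • vec4 a b c d = vec4 (r*a) (r*b) (r*c) (r*d) := by
  simp only [vec4]
  ext i
  fin_cases i <;> simp [vec4]

section computations

variable (f φ : ℝ → ℝ) (hf : ContDiff ℝ (⊤ : ℕ∞) f) (hφ : ContDiff ℝ (⊤ : ℕ∞) φ)

-- differentiability facts
lemma hfd (hf : ContDiff ℝ (⊤ : ℕ∞) f) : Differentiable ℝ f :=
  (hf.of_le (by simp) : ContDiff ℝ ((⊤:ℕ∞):WithTop ℕ∞) f).differentiable (by simp)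

lemma hfd' (hf : ContDiff ℝ (⊤ : ℕ∞) f) : Differentiable ℝ (deriv f) := by
  have h : ContDiff ℝ ((⊤:ℕ∞):WithTop ℕ∞) f := hf.of_le (by simp)
  exact ((contDiff_infty_iff_deriv.mp h).2).differentiable (by simp)

-- first partial derivatives of rotHyp
lemma pd0_rot (hf : ContDiff ℝ (⊤ : ℕ∞) f) (hφ : ContDiff ℝ (⊤ : ℕ∞) φ) (u v w : ℝ) :
    pd 0 (rotHyp f φ) u v w
      = vec4 (deriv f u * cos v * cos w) (deriv f u * sin v * cos w)
          (deriv f u * sin w) (deriv φ u) := by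
  show deriv (fun t => rotHyp f φ t v w) u = _
  refine HasDerivAt.deriv ?_
  exact hasDerivAt_vec4
    (((hfd f hf u).hasDerivAt.mul_const (cos v)).mul_const (cos w))
    (((hfd f hf u).hasDerivAt.mul_const (sin v)).mul_const (cos w))
    ((hfd f hf u).hasDerivAt.mul_const (sin w))
    (hfd φ hφ u).hasDerivAt

lemma pd1_rot (u v w : ℝ) :
    pd 1 (rotHyp f φ) u v w
      = vec4 (-(f u * sin v * cos w)) (f u * cos v * cos w) 0 0 := by
  show deriv (fun t => rotHyp f φ u t w) v = _
  refine HasDerivAt.deriv ?_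
  have h1 : HasDerivAt (fun t => f u * cos t * cos w) (-(f u * sin v * cos w)) v := by
    have := (((Real.hasDerivAt_cos v).const_mul (f u)).mul_const (cos w))
    simpa [mul_comm, mul_assoc, mul_left_comm] using this
  have h2 : HasDerivAt (fun t => f u * sin t * cos w) (f u * cos v * cos w) v :=
    ((Real.hasDerivAt_sin v).const_mul (f u)).mul_const (cos w)
  exact hasDerivAt_vec4 h1 h2 (hasDerivAt_const _ _) (hasDerivAt_const _ _)

lemma pd2_rot (u v w : ℝ) :
    pd 2 (rotHyp f φ) u v w
      = vec4 (-(f u * cos v * sin w)) (-(f u * sin v * sin w)) (f u * cos w) 0 := by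
  show deriv (fun t => rotHyp f φ u v t) w = _
  refine HasDerivAt.deriv ?_
  have h1 : HasDerivAt (fun t => f u * cos v * cos t) (-(f u * cos v * sin w)) w := by
    simpa using ((Real.hasDerivAt_cos w).const_mul (f u * cos v))
  have h2 : HasDerivAt (fun t => f u * sin v * cos t) (-(f u * sin v * sin w)) w := by
    simpa using ((Real.hasDerivAt_cos w).const_mul (f u * sin v))
  have h3 : HasDerivAt (fun t => f u * sin t) (f u * cos w) w :=
    (Real.hasDerivAt_sin w).const_mul (f u)
  exact hasDerivAt_vec4 h1 h2 h3 (hasDerivAt_const _ _)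

end computations

lemma hd_congr {g : ℝ → ℝ} {a b x : ℝ} (h : HasDerivAt g a x) (e : a = b) :
    HasDerivAt g b x := e ▸ h

section second

variable (f φ : ℝ → ℝ)

lemma pd00 (hf : ContDiff ℝ (⊤ : ℕ∞) f) (hφ : ContDiff ℝ (⊤ : ℕ∞) φ) (u v w : ℝ) :
    pd 0 (pd 0 (rotHyp f φ)) u v w
      = vec4 (deriv (deriv f) u * cos v * cos w) (deriv (deriv f) u * sin v * cos w)
          (deriv (deriv f) u * sin w) (deriv (deriv φ) u) := by
  show deriv (fun t => pd 0 (rotHyp f φ) t v w) u = _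
  have e : (fun t => pd 0 (rotHyp f φ) t v w)
      = fun t => vec4 (deriv f t * cos v * cos w) (deriv f t * sin v * cos w)
          (deriv f t * sin w) (deriv φ t) := funext fun t => pd0_rot f φ hf hφ t v w
  rw [e]
  exact (hasDerivAt_vec4
    (((hfd' f hf u).hasDerivAt.mul_const _).mul_const _)
    (((hfd' f hf u).hasDerivAt.mul_const _).mul_const _)
    ((hfd' f hf u).hasDerivAt.mul_const _)
    (hfd' φ hφ u).hasDerivAt).deriv

lemma pd01 (hf : ContDiff ℝ (⊤ : ℕ∞) f) (u v w : ℝ) :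
    pd 0 (pd 1 (rotHyp f φ)) u v w
      = vec4 (-(deriv f u * sin v * cos w)) (deriv f u * cos v * cos w) 0 0 := by
  show deriv (fun t => pd 1 (rotHyp f φ) t v w) u = _
  have e : (fun t => pd 1 (rotHyp f φ) t v w)
      = fun t => vec4 (-(f t * sin v * cos w)) (f t * cos v * cos w) 0 0 :=
    funext fun t => pd1_rot f φ t v w
  rw [e]
  exact (hasDerivAt_vec4
    ((((hfd f hf u).hasDerivAt.mul_const _).mul_const _).neg)
    (((hfd f hf u).hasDerivAt.mul_const _).mul_const _)
    (hasDerivAt_const _ _) (hasDerivAt_const _ _)).deriv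

lemma pd02 (hf : ContDiff ℝ (⊤ : ℕ∞) f) (u v w : ℝ) :
    pd 0 (pd 2 (rotHyp f φ)) u v w
      = vec4 (-(deriv f u * cos v * sin w)) (-(deriv f u * sin v * sin w))
          (deriv f u * cos w) 0 := by
  show deriv (fun t => pd 2 (rotHyp f φ) t v w) u = _
  have e : (fun t => pd 2 (rotHyp f φ) t v w)
      = fun t => vec4 (-(f t * cos v * sin w)) (-(f t * sin v * sin w)) (f t * cos w) 0 :=
    funext fun t => pd2_rot f φ t v w
  rw [e]
  exact (hasDerivAt_vec4
    ((((hfd f hf u).hasDerivAt.mul_const _).mul_const _).neg)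
    ((((hfd f hf u).hasDerivAt.mul_const _).mul_const _).neg)
    ((hfd f hf u).hasDerivAt.mul_const _)
    (hasDerivAt_const _ _)).deriv

lemma pd10 (hf : ContDiff ℝ (⊤ : ℕ∞) f) (hφ : ContDiff ℝ (⊤ : ℕ∞) φ) (u v w : ℝ) :
    pd 1 (pd 0 (rotHyp f φ)) u v w
      = vec4 (-(deriv f u * sin v * cos w)) (deriv f u * cos v * cos w) 0 0 := by
  show deriv (fun t => pd 0 (rotHyp f φ) u t w) v = _
  have e : (fun t => pd 0 (rotHyp f φ) u t w)
      = fun t => vec4 (deriv f u * cos t * cos w) (deriv f u * sin t * cos w)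
          (deriv f u * sin w) (deriv φ u) := funext fun t => pd0_rot f φ hf hφ u t w
  rw [e]
  exact (hasDerivAt_vec4
    (hd_congr (((Real.hasDerivAt_cos v).const_mul (deriv f u)).mul_const (cos w)) (by ring))
    (hd_congr (((Real.hasDerivAt_sin v).const_mul (deriv f u)).mul_const (cos w)) (by ring))
    (hasDerivAt_const _ _) (hasDerivAt_const _ _)).deriv

lemma pd11 (u v w : ℝ) :
    pd 1 (pd 1 (rotHyp f φ)) u v w
      = vec4 (-(f u * cos v * cos w)) (-(f u * sin v * cos w)) 0 0 := by
  show deriv (fun t => pd 1 (rotHyp f φ) u t w) v = _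
  have e : (fun t => pd 1 (rotHyp f φ) u t w)
      = fun t => vec4 (-(f u * sin t * cos w)) (f u * cos t * cos w) 0 0 :=
    funext fun t => pd1_rot f φ u t w
  rw [e]
  exact (hasDerivAt_vec4
    (hd_congr ((((Real.hasDerivAt_sin v).const_mul (f u)).mul_const (cos w)).neg) (by ring))
    (hd_congr (((Real.hasDerivAt_cos v).const_mul (f u)).mul_const (cos w)) (by ring))
    (hasDerivAt_const _ _) (hasDerivAt_const _ _)).deriv

lemma pd12 (u v w : ℝ) :
    pd 1 (pd 2 (rotHyp f φ)) u v w
      = vec4 (f u * sin v * sin w) (-(f u * cos v * sin w)) 0 0 := by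
  show deriv (fun t => pd 2 (rotHyp f φ) u t w) v = _
  have e : (fun t => pd 2 (rotHyp f φ) u t w)
      = fun t => vec4 (-(f u * cos t * sin w)) (-(f u * sin t * sin w)) (f u * cos w) 0 :=
    funext fun t => pd2_rot f φ u t w
  rw [e]
  exact (hasDerivAt_vec4
    (hd_congr ((((Real.hasDerivAt_cos v).const_mul (f u)).mul_const (sin w)).neg) (by ring))
    (hd_congr ((((Real.hasDerivAt_sin v).const_mul (f u)).mul_const (sin w)).neg) (by ring))
    (hasDerivAt_const _ _) (hasDerivAt_const _ _)).deriv

lemma pd20 (hf : ContDiff ℝ (⊤ : ℕ∞) f) (hφ : ContDiff ℝ (⊤ : ℕ∞) φ) (u v w : ℝ) :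
    pd 2 (pd 0 (rotHyp f φ)) u v w
      = vec4 (-(deriv f u * cos v * sin w)) (-(deriv f u * sin v * sin w))
          (deriv f u * cos w) 0 := by
  show deriv (fun t => pd 0 (rotHyp f φ) u v t) w = _
  have e : (fun t => pd 0 (rotHyp f φ) u v t)
      = fun t => vec4 (deriv f u * cos v * cos t) (deriv f u * sin v * cos t)
          (deriv f u * sin t) (deriv φ u) := funext fun t => pd0_rot f φ hf hφ u v t
  rw [e]
  exact (hasDerivAt_vec4
    (hd_congr ((Real.hasDerivAt_cos w).const_mul (deriv f u * cos v)) (by ring))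
    (hd_congr ((Real.hasDerivAt_cos w).const_mul (deriv f u * sin v)) (by ring))
    ((Real.hasDerivAt_sin w).const_mul (deriv f u))
    (hasDerivAt_const _ _)).deriv

lemma pd21 (u v w : ℝ) :
    pd 2 (pd 1 (rotHyp f φ)) u v w
      = vec4 (f u * sin v * sin w) (-(f u * cos v * sin w)) 0 0 := by
  show deriv (fun t => pd 1 (rotHyp f φ) u v t) w = _
  have e : (fun t => pd 1 (rotHyp f φ) u v t)
      = fun t => vec4 (-(f u * sin v * cos t)) (f u * cos v * cos t) 0 0 :=
    funext fun t => pd1_rot f φ u v t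
  rw [e]
  exact (hasDerivAt_vec4
    (hd_congr (((Real.hasDerivAt_cos w).const_mul (f u * sin v)).neg) (by ring))
    (hd_congr ((Real.hasDerivAt_cos w).const_mul (f u * cos v)) (by ring))
    (hasDerivAt_const _ _) (hasDerivAt_const _ _)).deriv

lemma pd22 (u v w : ℝ) :
    pd 2 (pd 2 (rotHyp f φ)) u v w
      = vec4 (-(f u * cos v * cos w)) (-(f u * sin v * cos w)) (-(f u * sin w)) 0 := by
  show deriv (fun t => pd 2 (rotHyp f φ) u v t) w = _
  have e : (fun t => pd 2 (rotHyp f φ) u v t)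
      = fun t => vec4 (-(f u * cos v * sin t)) (-(f u * sin v * sin t)) (f u * cos t) 0 :=
    funext fun t => pd2_rot f φ u v t
  rw [e]
  exact (hasDerivAt_vec4
    (hd_congr ((((Real.hasDerivAt_sin w).const_mul (f u * cos v))).neg) (by ring))
    (hd_congr ((((Real.hasDerivAt_sin w).const_mul (f u * sin v))).neg) (by ring))
    (hd_congr (((Real.hasDerivAt_cos w).const_mul (f u))) (by ring))
    (hasDerivAt_const _ _)).deriv

end second

section matrices

variable (f φ : ℝ → ℝ)

lemma firstFF_eq (hf : ContDiff ℝ (⊤ : ℕ∞) f) (hφ : ContDiff ℝ (⊤ : ℕ∞) φ) (u v w : ℝ) :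
    firstFF f φ u v w
      = !![deriv f u ^ 2 + deriv φ u ^ 2, 0, 0;
           0, f u ^ 2 * cos w ^ 2, 0;
           0, 0, f u ^ 2] := by
  have hv := sin_sq_add_cos_sq v
  have hw := sin_sq_add_cos_sq w
  ext i j
  fin_cases i <;> fin_cases j <;>
    simp [firstFF, pd0_rot f φ hf hφ, pd1_rot, pd2_rot, inner_vec4, vec4, Fin.sum_univ_four, PiLp.inner_apply, EuclideanSpace.real_norm_sq_eq] <;>
    (try simp [Matrix.vecHead, Matrix.vecTail]) <;>
    (try ring) <;>
    (try ring) <;>    (try left; rfl) <;>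
    (simp only [show sin v ^ 2 = 1 - cos v ^ 2 by linarith [sin_sq_add_cos_sq v],
        show sin w ^ 2 = 1 - cos w ^ 2 by linarith [sin_sq_add_cos_sq w]]) <;>
    ring

lemma secondFF_eq (hf : ContDiff ℝ (⊤ : ℕ∞) f) (hφ : ContDiff ℝ (⊤ : ℕ∞) φ) (u v w : ℝ) :
    secondFF f φ u v w
      = ((deriv f u ^ 2 + deriv φ u ^ 2) ^ (-(1 : ℝ) / 2)) •
        !![-(deriv f u * deriv (deriv φ) u - deriv (deriv f) u * deriv φ u), 0, 0;
           0, -(f u * deriv φ u * cos w ^ 2), 0;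
           0, 0, -(f u * deriv φ u)] := by
  have hv := sin_sq_add_cos_sq v
  have hw := sin_sq_add_cos_sq w
  ext i j
  fin_cases i <;> fin_cases j <;>
    simp [secondFF, gaussMap, smul_vec4,
      pd00 f φ hf hφ, pd01 f φ hf, pd02 f φ hf, pd10 f φ hf hφ, pd11, pd12,
      pd20 f φ hf hφ, pd21, pd22, inner_vec4, vec4, Fin.sum_univ_four, PiLp.inner_apply, EuclideanSpace.real_norm_sq_eq] <;>
    (try simp [Matrix.vecHead, Matrix.vecTail]) <;>
    (try ring) <;>
    (try ring) <;>    (try left; rfl) <;>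
    (simp only [show sin v ^ 2 = 1 - cos v ^ 2 by linarith [sin_sq_add_cos_sq v],
        show sin w ^ 2 = 1 - cos w ^ 2 by linarith [sin_sq_add_cos_sq w]]) <;>
    ring

end matrices


/-- At every point with `W = f'² + φ'² > 0`, `f(u) ≠ 0` and
`cos w ≠ 0`, the third (Gauss–Kronecker) curvature of the rotational hypersurface —
defined by the characteristic polynomial identity
`det(S - λ·1) = -λ³ + 3c₁λ² - 3c₂λ + c₃` — is `c₃ = -φ'²·ψ/(f²·W^{5/2})`,
where `ψ = f'·φ'' - f''·φ'`. -/
theorem rotHyp_third_curvature (f φ : ℝ → ℝ) (hf : ContDiff ℝ (⊤ : ℕ∞) f) (hφ : ContDiff ℝ (⊤ : ℕ∞) φ)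
    (u v w : ℝ) (hW : 0 < deriv f u ^ 2 + deriv φ u ^ 2)
    (hfu : f u ≠ 0) (hw : cos w ≠ 0) (c₁ c₂ c₃ : ℝ)
    (hchar : ∀ lam : ℝ,
      (shapeOp f φ u v w - lam • (1 : Matrix (Fin 3) (Fin 3) ℝ)).det
        = -lam ^ 3 + 3 * c₁ * lam ^ 2 - 3 * c₂ * lam + c₃) :
    c₃ = -(deriv φ u ^ 2 * (deriv f u * deriv (deriv φ) u - deriv (deriv f) u * deriv φ u)
          / (f u ^ 2 * (deriv f u ^ 2 + deriv φ u ^ 2) ^ ((5 : ℝ) / 2))) := by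
  set W : ℝ := deriv f u ^ 2 + deriv φ u ^ 2 with hWdef
  set F' : ℝ := deriv f u
  set P' : ℝ := deriv φ u
  set F'' : ℝ := deriv (deriv f) u
  set P'' : ℝ := deriv (deriv φ) u
  have hc : c₃ = (shapeOp f φ u v w).det := by
    have h := hchar 0
    simpa using h.symm
  have hdetI : (firstFF f φ u v w).det = W * (f u ^ 2 * cos w ^ 2) * f u ^ 2 := by
    rw [firstFF_eq f φ hf hφ u v w]
    simp [Matrix.det_fin_three]
    left; left; rfl
  have hdetII : (secondFF f φ u v w).det
      = (W ^ (-(1:ℝ)/2)) ^ 3 *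
        (-(F' * P'' - F'' * P') * -(f u * P' * cos w ^ 2) * -(f u * P')) := by
    rw [secondFF_eq f φ hf hφ u v w]
    rw [Matrix.det_smul]
    simp [Matrix.det_fin_three]
    try ring
  have hdetS : (shapeOp f φ u v w).det
      = (firstFF f φ u v w).det⁻¹ * (secondFF f φ u v w).det := by
    rw [shapeOp, Matrix.det_mul, Matrix.det_nonsing_inv, Ring.inverse_eq_inv']
  have hr3 : (W ^ (-(1:ℝ)/2)) ^ (3:ℕ) = W ^ (-(3:ℝ)/2) := by
    rw [← Real.rpow_natCast (W ^ (-(1:ℝ)/2)) 3, ← Real.rpow_mul hW.le]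
    norm_num
  have hr5 : W ^ (-(3:ℝ)/2) = (W ^ ((5:ℝ)/2))⁻¹ * W := by
    rw [show (-(3:ℝ)/2) = -(5/2) + 1 by norm_num, Real.rpow_add hW, Real.rpow_one,
      Real.rpow_neg hW.le]
  have hW0 : W ≠ 0 := hW.ne'
  have hA0 : W ^ ((5:ℝ)/2) ≠ 0 := (Real.rpow_pos_of_pos hW _).ne'
  rw [hc, hdetS, hdetI, hdetII, hr3, hr5]
  field_simp

end
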